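/- Let h : ℝⁿ → ℝ, let K : ℝ → ℝ be Lipschitz with K(0) = 0, let a : ℝⁿ → ℝ be Lipschitz with constant c_a, let b : ℝⁿ → ℝᵐ be Lipschitz with constant c_b, and suppose κ := K ∘ h : ℝⁿ → ℝ is Lipschitz with constant c_κ. Let x : ℝ → ℝⁿ be Lipschitz with constant L_x, let u ∈ ℝᵐ with ‖u‖ ≤ B_u, fix t_k ∈ ℝ and ΔT > 0, and set η := ΔT · L_x · (c_a + c_b·B_u + c_κ). Assume that for every t ∈ [t_k, t_k + ΔT] the function t ↦ h(x(t)) is differentiable at t with derivative a(x(t)) + ⟨b(x(t)), u⟩, that h(x(t_k)) ≥ 0, and that a(x(t_k)) + ⟨b(x(t_k)), u⟩ + K(h(x(t_k))) ≥ η. Then h(x(t)) ≥ 0 for all t ∈ [t_k, t_k + ΔT]. -/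

import Mathlib

/-!
Along the trajectory, `φ t = h (x t)` has derivative `a (x t) + ⟪b (x t), u⟫`. Since `x` moves
by at most `L_x ΔT` during the sampling interval, the Lipschitz bounds on `a`, `b` and `K ∘ h`
let the robust condition at `t_k` lose at most `η`, so `φ' ≥ -K ∘ φ` on the whole interval. Where
`φ < 0`, the Lipschitz bound on `K` turns this into the linear inequality `φ' ≥ c_K φ`, so `-φ`
can never cross the barriers `s ↦ ε e^{(c_K + 1) s}`, which grow strictly faster; letting
`ε → 0` keeps `φ` nonnegative.
-/

open Set
open scoped RealInnerProductSpace NNReal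

theorem nonneg_of_norm_sub_le_mul_norm_sub {E F : Type*} [NormedAddCommGroup E] [Nontrivial E]
    [SeminormedAddCommGroup F] {f : E → F} {c : ℝ} (hf : ∀ p q, ‖f p - f q‖ ≤ c * ‖p - q‖) :
    0 ≤ c := by
  obtain ⟨p, hp⟩ := exists_ne (0 : E)
  have := (norm_nonneg _).trans (hf p 0)
  rw [sub_zero] at this
  exact nonneg_of_mul_nonneg_left this (norm_pos_iff.2 hp)

theorem nonneg_of_mul_le_deriv_of_neg {φ φ' : ℝ → ℝ} {a b L : ℝ}
    (hφ : ContinuousOn φ (Icc a b))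
    (hφ' : ∀ t ∈ Ico a b, HasDerivWithinAt φ (φ' t) (Ici t) t)
    (ha : 0 ≤ φ a) (hbound : ∀ t ∈ Ico a b, φ t < 0 → L * φ t ≤ φ' t) :
    ∀ t ∈ Icc a b, 0 ≤ φ t := by
  intro t ht
  have fence : ∀ ε > 0, -φ t ≤ ε := by
    intro ε hε
    set B : ℝ → ℝ := fun s => ε * Real.exp ((L + 1) * (s - t))
    have hB : ∀ s, HasDerivAt B ((L + 1) * B s) s := fun s =>
      ((((hasDerivAt_id s).sub_const t).const_mul (L + 1)).exp.const_mul ε).congr_deriv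
        (by simp only [B, id]; ring)
    have hBa : -φ a ≤ B a := by
      have : 0 < B a := by positivity
      linarith
    have hBt : B t = ε := by simp [B]
    refine hBt ▸ image_le_of_deriv_right_lt_deriv_boundary hφ.neg (fun s hs => (hφ' s hs).neg)
      hBa hB (fun s hs hsB => ?_) ht
    rw [Pi.neg_apply] at hsB
    have hBpos : 0 < B s := by positivity
    have hφs : φ s = -B s := by linarith
    have := hbound s hs (by linarith)
    rw [hφs] at this
    linarith
  exact neg_nonpos.1 (le_of_forall_pos_le_add fun ε hε => by simpa using fence ε hε)

theorem LipschitzWith.nonneg_of_neg_le_deriv {K : ℝ → ℝ} {cK : ℝ≥0} (hK : LipschitzWith cK K)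
    (hK0 : K 0 = 0) {φ φ' : ℝ → ℝ} {a b : ℝ} (hφ : ContinuousOn φ (Icc a b))
    (hφ' : ∀ t ∈ Ico a b, HasDerivWithinAt φ (φ' t) (Ici t) t)
    (ha : 0 ≤ φ a) (hbound : ∀ t ∈ Ico a b, -K (φ t) ≤ φ' t) :
    ∀ t ∈ Icc a b, 0 ≤ φ t := by
  refine nonneg_of_mul_le_deriv_of_neg (L := cK) hφ hφ' ha fun t ht hneg => ?_
  have hKφ : K (φ t) ≤ cK * -φ t := by
    have := hK.dist_le_mul (φ t) 0
    rw [Real.dist_eq, Real.dist_eq, hK0, sub_zero, sub_zero, abs_of_neg hneg] at this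
    exact (le_abs_self _).trans this
  linarith [hbound t ht]

theorem le_add_inner_add_of_norm_sub_le {E F : Type*} [SeminormedAddCommGroup E]
    [NormedAddCommGroup F] [InnerProductSpace ℝ F] {a κ : E → ℝ} {b : E → F}
    {c_a c_b c_κ B δ : ℝ} (hc_a : 0 ≤ c_a) (hc_b : 0 ≤ c_b) (hc_κ : 0 ≤ c_κ)
    (ha : ∀ p q, |a p - a q| ≤ c_a * ‖p - q‖) (hb : ∀ p q, ‖b p - b q‖ ≤ c_b * ‖p - q‖)
    (hκ : ∀ p q, |κ p - κ q| ≤ c_κ * ‖p - q‖) {u : F} (hu : ‖u‖ ≤ B) {p q : E}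
    (hpq : ‖p - q‖ ≤ δ) :
    a q + ⟪b q, u⟫ + κ q - δ * (c_a + c_b * B + c_κ) ≤ a p + ⟪b p, u⟫ + κ p := by
  have h_a := (abs_le.1 ((ha p q).trans (mul_le_mul_of_nonneg_left hpq hc_a))).1
  have h_κ := (abs_le.1 ((hκ p q).trans (mul_le_mul_of_nonneg_left hpq hc_κ))).1
  have h_b : |⟪b p - b q, u⟫| ≤ c_b * δ * B :=
    (abs_real_inner_le_norm _ _).trans <| mul_le_mul
      ((hb p q).trans (mul_le_mul_of_nonneg_left hpq hc_b)) hu (norm_nonneg u)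
      (mul_nonneg hc_b ((norm_nonneg _).trans hpq))
  rw [inner_sub_left] at h_b
  linarith [(abs_le.1 h_b).1]

theorem stmt3_general {n m : ℕ}
    (h : EuclideanSpace ℝ (Fin n) → ℝ)
    (K : ℝ → ℝ) (cK : ℝ≥0) (hK : LipschitzWith cK K) (hK0 : K 0 = 0)
    (a : EuclideanSpace ℝ (Fin n) → ℝ)
    (b : EuclideanSpace ℝ (Fin n) → EuclideanSpace ℝ (Fin m))
    (c_a c_b c_κ L_x B_u : ℝ)
    (ha : ∀ p q, |a p - a q| ≤ c_a * ‖p - q‖)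
    (hb : ∀ p q, ‖b p - b q‖ ≤ c_b * ‖p - q‖)
    (hκ : ∀ p q, |K (h p) - K (h q)| ≤ c_κ * ‖p - q‖)
    (x : ℝ → EuclideanSpace ℝ (Fin n))
    (hx : ∀ s t : ℝ, ‖x s - x t‖ ≤ L_x * |s - t|)
    (u : EuclideanSpace ℝ (Fin m)) (hu : ‖u‖ ≤ B_u)
    (t_k ΔT : ℝ)
    (hderiv : ∀ t ∈ Set.Icc t_k (t_k + ΔT),
      HasDerivAt (fun s => h (x s)) (a (x t) + ⟪b (x t), u⟫) t)
    (hsafe0 : 0 ≤ h (x t_k))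
    (hrobust : a (x t_k) + ⟪b (x t_k), u⟫ + K (h (x t_k)) ≥
      ΔT * L_x * (c_a + c_b * B_u + c_κ)) :
    ∀ t ∈ Set.Icc t_k (t_k + ΔT), 0 ≤ h (x t) := by
  rcases subsingleton_or_nontrivial (EuclideanSpace ℝ (Fin n)) with _ | _
  · intro t _
    rwa [Subsingleton.elim (x t) (x t_k)]
  have hL_x : 0 ≤ L_x := nonneg_of_norm_sub_le_mul_norm_sub (f := x) (by simpa using hx)
  have hdrift : ∀ t ∈ Ico t_k (t_k + ΔT), -K (h (x t)) ≤ a (x t) + ⟪b (x t), u⟫ := by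
    intro t ht
    have hdist : ‖x t - x t_k‖ ≤ ΔT * L_x := by
      refine (hx t t_k).trans ?_
      rw [abs_of_nonneg (by linarith [ht.1]), mul_comm]
      exact mul_le_mul_of_nonneg_right (by linarith [ht.2]) hL_x
    have hc_a : 0 ≤ c_a := nonneg_of_norm_sub_le_mul_norm_sub (f := a)
      fun p q => (Real.norm_eq_abs _).trans_le (ha p q)
    have hc_κ : 0 ≤ c_κ := nonneg_of_norm_sub_le_mul_norm_sub (f := fun p => K (h p))
      fun p q => (Real.norm_eq_abs _).trans_le (hκ p q)
    have hmargin := le_add_inner_add_of_norm_sub_le (κ := fun p => K (h p)) hc_a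
      (nonneg_of_norm_sub_le_mul_norm_sub hb) hc_κ ha hb hκ hu hdist
    linarith
  exact hK.nonneg_of_neg_le_deriv hK0
    (fun t ht => (hderiv t ht).continuousAt.continuousWithinAt)
    (fun t ht => (hderiv t (Ico_subset_Icc_self ht)).hasDerivWithinAt) hsafe0 hdrift

/-- Robust CBF lemma (Lemma 1 of the paper): under a zero-order-hold control
`u` with `‖u‖ ≤ B_u`, if the trajectory is safe at the sampling instant `t_k`
and the robust CBF condition with discretization margin
`η = ΔT · L_x · (c_a + c_b·B_u + c_κ)` holds at `t_k`, then the trajectory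
stays in the safe set `{x : h x ≥ 0}` on all of `[t_k, t_k + ΔT]`. -/
theorem stmt3 {n m : ℕ}
    (h : EuclideanSpace ℝ (Fin n) → ℝ)
    (K : ℝ → ℝ) (cK : ℝ≥0) (hK : LipschitzWith cK K) (hK0 : K 0 = 0)
    (a : EuclideanSpace ℝ (Fin n) → ℝ)
    (b : EuclideanSpace ℝ (Fin n) → EuclideanSpace ℝ (Fin m))
    (c_a c_b c_κ L_x B_u : ℝ)
    (ha : ∀ p q, |a p - a q| ≤ c_a * ‖p - q‖)
    (hb : ∀ p q, ‖b p - b q‖ ≤ c_b * ‖p - q‖)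
    (hκ : ∀ p q, |K (h p) - K (h q)| ≤ c_κ * ‖p - q‖)
    (x : ℝ → EuclideanSpace ℝ (Fin n))
    (hx : ∀ s t : ℝ, ‖x s - x t‖ ≤ L_x * |s - t|)
    (u : EuclideanSpace ℝ (Fin m)) (hu : ‖u‖ ≤ B_u)
    (t_k ΔT : ℝ) (hΔT : 0 < ΔT)
    (hderiv : ∀ t ∈ Set.Icc t_k (t_k + ΔT),
      HasDerivAt (fun s => h (x s)) (a (x t) + ⟪b (x t), u⟫) t)
    (hsafe0 : 0 ≤ h (x t_k))
    (hrobust : a (x t_k) + ⟪b (x t_k), u⟫ + K (h (x t_k)) ≥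
      ΔT * L_x * (c_a + c_b * B_u + c_κ)) :
    ∀ t ∈ Set.Icc t_k (t_k + ΔT), 0 ≤ h (x t) :=
  stmt3_general h K cK hK hK0 a b c_a c_b c_κ L_x B_u ha hb hκ x hx u hu t_k ΔT hderiv hsafe0
    hrobust
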